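/- Let n ≥ 2 and 0 < p1 < p0 < 1 with n·(p0 − p1) > 2·p0. Define f_n(s) = 2(n−1)·p0·p1·s / ((n−2)p0² + n·p1²·s) for s ∈ (0,1], and the sequence s_0 = 1, s_{t+1} = f_n(s_t). Then: (i) f_n is strictly increasing on (0,1] and the map s ↦ f_n(s)/s is strictly decreasing on (0,1]; (ii) setting s* = max{0, (2(n−1)p0·p1 − (n−2)p0²)/(n·p1²)}, one has s* ∈ [0,1), the sequence (s_t) is nonincreasing, stays in [s*, 1], and converges to s*; (iii) the sequence Δ_t = ((n−1)p0 − n·p1·s_t)/((n−1)p0 + n·p1·s_t) is nondecreasing in t. -/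

import Mathlib

/-!
With `a = 2(n-1)p₀p₁`, `b = (n-2)p₀²`, `c = n p₁²`, the contrast map is the Beverton–Holt map
`s ↦ a s / (b + c s)` with `a, b, c > 0`, and the gap hypothesis is exactly `a < b + c`.
Such a map is increasing, `f(s)/s = a/(b + cs)` is decreasing, and its fixed points on `[0, ∞)`
are `0` and `(a - b)/c`. Hence `[s*, ∞)` is invariant and on it `f(s) ≤ s`, so the orbit of `1`
decreases to a fixed point, which can only be `s*`. Finally `Δ_t` is a decreasing function of
`s_t`, so it increases along the orbit.
-/

namespace ContrastRecursion

/-- The contrast map `f_n`. -/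
noncomputable def fmap (n : ℕ) (p0 p1 : ℝ) (s : ℝ) : ℝ :=
  2 * ((n : ℝ) - 1) * p0 * p1 * s / (((n : ℝ) - 2) * p0 ^ 2 + (n : ℝ) * p1 ^ 2 * s)

/-- The contrast sequence `s_0 = 1`, `s_{t+1} = f_n(s_t)`. -/
noncomputable def sseq (n : ℕ) (p0 p1 : ℝ) : ℕ → ℝ
  | 0 => 1
  | t + 1 => fmap n p0 p1 (sseq n p0 p1 t)

/-- The fixed point `s* = max{0, (2(n−1)p0p1 − (n−2)p0²)/(n·p1²)}`. -/
noncomputable def sstar (n : ℕ) (p0 p1 : ℝ) : ℝ :=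
  max 0 ((2 * ((n : ℝ) - 1) * p0 * p1 - ((n : ℝ) - 2) * p0 ^ 2) / ((n : ℝ) * p1 ^ 2))

/-- The population eigengap level `Δ_t`. -/
noncomputable def Delta (n : ℕ) (p0 p1 : ℝ) (t : ℕ) : ℝ :=
  (((n : ℝ) - 1) * p0 - (n : ℝ) * p1 * sseq n p0 p1 t)
    / (((n : ℝ) - 1) * p0 + (n : ℝ) * p1 * sseq n p0 p1 t)

open Filter Topology Set

noncomputable def bevertonHolt (a b c s : ℝ) : ℝ :=
  a * s / (b + c * s)

noncomputable def bevertonHoltFix (a b c : ℝ) : ℝ :=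
  max 0 ((a - b) / c)

section BevertonHolt

variable {a b c : ℝ}

theorem bevertonHoltFix_lt_one (hc : 0 < c) (hab : a < b + c) : bevertonHoltFix a b c < 1 :=
  max_lt one_pos ((div_lt_one hc).2 (by linarith))

theorem bevertonHolt_nonneg (ha : 0 ≤ a) (hb : 0 < b) (hc : 0 ≤ c) {s : ℝ} (hs : 0 ≤ s) :
    0 ≤ bevertonHolt a b c s :=
  div_nonneg (mul_nonneg ha hs) (by positivity)

theorem strictMonoOn_bevertonHolt (ha : 0 < a) (hb : 0 < b) (hc : 0 ≤ c) :
    StrictMonoOn (bevertonHolt a b c) (Ici 0) := by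
  intro x (hx : 0 ≤ x) y (hy : 0 ≤ y) hxy
  rw [bevertonHolt, bevertonHolt, div_lt_div_iff₀ (by positivity) (by positivity)]
  nlinarith [mul_pos ha hb]

theorem bevertonHolt_div_self {s : ℝ} (hs : s ≠ 0) :
    bevertonHolt a b c s / s = a / (b + c * s) := by
  rw [bevertonHolt, div_div, mul_comm (b + c * s), ← div_div, mul_div_cancel_right₀ a hs]

theorem strictAntiOn_bevertonHolt_div_self (ha : 0 < a) (hb : 0 ≤ b) (hc : 0 < c) :
    StrictAntiOn (fun s => bevertonHolt a b c s / s) (Ioi 0) := by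
  intro x (hx : 0 < x) y (hy : 0 < y) hxy
  simp only [bevertonHolt_div_self hx.ne', bevertonHolt_div_self hy.ne']
  gcongr

theorem bevertonHolt_eq_self (ha : a ≠ 0) (hc : c ≠ 0) {s : ℝ} (hs : s = (a - b) / c) :
    bevertonHolt a b c s = s := by
  have hden : b + c * s = a := by rw [hs, mul_div_cancel₀ _ hc]; ring
  rw [bevertonHolt, hden, mul_div_cancel_left₀ _ ha]

theorem le_bevertonHoltFix_of_isFixedPt (hb : 0 < b) (hc : 0 < c) {s : ℝ} (hs : 0 ≤ s)
    (hfix : Function.IsFixedPt (bevertonHolt a b c) s) : s ≤ bevertonHoltFix a b c := by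
  have hden : 0 < b + c * s := by positivity
  have hprod : s * (a - b - c * s) = 0 := by
    have := hfix.eq
    rw [bevertonHolt, div_eq_iff hden.ne'] at this
    linear_combination this
  rcases mul_eq_zero.1 hprod with h0 | hroot
  · exact h0 ▸ le_max_left _ _
  · refine le_trans (le_of_eq ?_) (le_max_right _ _)
    field_simp
    linarith

theorem bevertonHolt_le_self (hb : 0 < b) (hc : 0 < c) {s : ℝ}
    (hs : bevertonHoltFix a b c ≤ s) :
    bevertonHolt a b c s ≤ s := by
  have hs0 : 0 ≤ s := (le_max_left _ _).trans hs
  have hroot : a ≤ b + c * s := by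
    have := (div_le_iff₀ hc).1 ((le_max_right _ _).trans hs)
    linarith
  rw [bevertonHolt, div_le_iff₀ (by positivity)]
  nlinarith

/-- `s*` is `0` or the positive fixed point, so monotonicity of `f` gives `s* = f s* ≤ f s`. -/
theorem bevertonHoltFix_le_bevertonHolt (ha : 0 < a) (hb : 0 < b) (hc : 0 < c) {s : ℝ}
    (hs : bevertonHoltFix a b c ≤ s) : bevertonHoltFix a b c ≤ bevertonHolt a b c s := by
  have hfix0 : 0 ≤ bevertonHoltFix a b c := le_max_left _ _
  have hs0 : 0 ≤ s := hfix0.trans hs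
  rcases le_total ((a - b) / c) 0 with hneg | hpos
  · rw [bevertonHoltFix, max_eq_left hneg]
    exact bevertonHolt_nonneg ha.le hb hc.le hs0
  · have hfix : bevertonHoltFix a b c = (a - b) / c := max_eq_right hpos
    calc bevertonHoltFix a b c = bevertonHolt a b c (bevertonHoltFix a b c) :=
          (bevertonHolt_eq_self ha.ne' hc.ne' hfix).symm
      _ ≤ bevertonHolt a b c s :=
          (strictMonoOn_bevertonHolt ha hb hc.le).monotoneOn hfix0 hs0 hs

theorem bevertonHoltFix_le_iterate (ha : 0 < a) (hb : 0 < b) (hc : 0 < c) {x : ℝ}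
    (hx : bevertonHoltFix a b c ≤ x) (t : ℕ) :
    bevertonHoltFix a b c ≤ (bevertonHolt a b c)^[t] x := by
  induction t with
  | zero => exact hx
  | succ t ih =>
    rw [Function.iterate_succ_apply']
    exact bevertonHoltFix_le_bevertonHolt ha hb hc ih

theorem antitone_iterate_bevertonHolt (ha : 0 < a) (hb : 0 < b) (hc : 0 < c) {x : ℝ}
    (hx : bevertonHoltFix a b c ≤ x) : Antitone fun t => (bevertonHolt a b c)^[t] x := by
  refine antitone_nat_of_succ_le fun t => ?_
  rw [Function.iterate_succ_apply']
  exact bevertonHolt_le_self hb hc (bevertonHoltFix_le_iterate ha hb hc hx t)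

theorem tendsto_iterate_bevertonHolt (ha : 0 < a) (hb : 0 < b) (hc : 0 < c) {x : ℝ}
    (hx : bevertonHoltFix a b c ≤ x) :
    Tendsto (fun t => (bevertonHolt a b c)^[t] x) atTop (𝓝 (bevertonHoltFix a b c)) := by
  have hlow := bevertonHoltFix_le_iterate ha hb hc hx
  have hconv := tendsto_atTop_ciInf (antitone_iterate_bevertonHolt ha hb hc hx)
    ⟨_, forall_mem_range.2 hlow⟩
  set L := ⨅ t, (bevertonHolt a b c)^[t] x
  have hL : bevertonHoltFix a b c ≤ L := le_ciInf hlow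
  have hL0 : 0 ≤ L := (le_max_left _ _).trans hL
  have hcont : ContinuousAt (bevertonHolt a b c) L :=
    ContinuousAt.div (by fun_prop) (by fun_prop) (by positivity)
  have hfix := isFixedPt_of_tendsto_iterate hconv hcont
  rwa [le_antisymm (le_bevertonHoltFix_of_isFixedPt hb hc hL0 hfix) hL] at hconv

end BevertonHolt

theorem antitoneOn_sub_div_add {A B : ℝ} (hA : 0 < A) (hB : 0 ≤ B) :
    AntitoneOn (fun s => (A - B * s) / (A + B * s)) (Ici 0) := by
  intro x (hx : 0 ≤ x) y (hy : 0 ≤ y) hxy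
  dsimp only
  rw [div_le_div_iff₀ (by positivity) (by positivity)]
  nlinarith [mul_nonneg (mul_nonneg hA.le hB) (sub_nonneg.2 hxy)]

section Contrast

variable {n : ℕ} {p0 p1 : ℝ}

theorem sseq_eq_iterate (t : ℕ) : sseq n p0 p1 t = (fmap n p0 p1)^[t] 1 := by
  induction t with
  | zero => rfl
  | succ t ih => rw [Function.iterate_succ_apply', ← ih, sseq]

theorem contrast_coefficients_pos (hp1 : 0 < p1) (hp01 : p1 < p0)
    (hgap : 2 * p0 < (n : ℝ) * (p0 - p1)) :
    0 < 2 * ((n : ℝ) - 1) * p0 * p1 ∧ 0 < ((n : ℝ) - 2) * p0 ^ 2 ∧ 0 < (n : ℝ) * p1 ^ 2 := by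
  have hp0 : 0 < p0 := hp1.trans hp01
  have hn : (2 : ℝ) < n := by nlinarith
  refine ⟨by nlinarith [mul_pos hp0 hp1], by nlinarith [sq_pos_of_pos hp0], by positivity⟩

/-- `b + c - a = (p0 - p1) * (n * (p0 - p1) - 2 * p0)`. -/
theorem contrast_coefficients_lt (hp01 : p1 < p0) (hgap : 2 * p0 < (n : ℝ) * (p0 - p1)) :
    2 * ((n : ℝ) - 1) * p0 * p1 < ((n : ℝ) - 2) * p0 ^ 2 + (n : ℝ) * p1 ^ 2 := by
  nlinarith [mul_pos (sub_pos.2 hp01) (sub_pos.2 hgap)]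

end Contrast

theorem contrast_recursion_general (n : ℕ) (p0 p1 : ℝ)
    (hp1 : 0 < p1) (hp01 : p1 < p0)
    (hgap : 2 * p0 < (n : ℝ) * (p0 - p1)) :
    StrictMonoOn (fmap n p0 p1) (Set.Ioc 0 1)
    ∧ StrictAntiOn (fun s => fmap n p0 p1 s / s) (Set.Ioc 0 1)
    ∧ (0 ≤ sstar n p0 p1 ∧ sstar n p0 p1 < 1)
    ∧ (∀ t, sseq n p0 p1 (t + 1) ≤ sseq n p0 p1 t)
    ∧ (∀ t, sstar n p0 p1 ≤ sseq n p0 p1 t ∧ sseq n p0 p1 t ≤ 1)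
    ∧ Filter.Tendsto (sseq n p0 p1) Filter.atTop (nhds (sstar n p0 p1))
    ∧ Monotone (Delta n p0 p1) := by
  obtain ⟨ha, hb, hc⟩ := contrast_coefficients_pos hp1 hp01 hgap
  have hstar_lt : sstar n p0 p1 < 1 :=
    bevertonHoltFix_lt_one hc (contrast_coefficients_lt hp01 hgap)
  have hstar0 : 0 ≤ sstar n p0 p1 := le_max_left _ _
  have hseq : sseq n p0 p1 = fun t => (fmap n p0 p1)^[t] 1 := funext sseq_eq_iterate
  have hanti : Antitone (sseq n p0 p1) :=
    hseq ▸ antitone_iterate_bevertonHolt ha hb hc hstar_lt.le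
  have hlow (t : ℕ) : sstar n p0 p1 ≤ sseq n p0 p1 t :=
    hseq ▸ bevertonHoltFix_le_iterate ha hb hc hstar_lt.le t
  refine ⟨(strictMonoOn_bevertonHolt ha hb hc.le).mono
      (Ioc_subset_Ioi_self.trans Ioi_subset_Ici_self),
    (strictAntiOn_bevertonHolt_div_self ha hb.le hc).mono Ioc_subset_Ioi_self,
    ⟨hstar0, hstar_lt⟩, fun t => hanti t.le_succ, fun t => ⟨hlow t, hanti t.zero_le⟩,
    hseq ▸ tendsto_iterate_bevertonHolt ha hb hc hstar_lt.le, ?_⟩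
  have hΔ := antitoneOn_sub_div_add (A := ((n : ℝ) - 1) * p0) (B := (n : ℝ) * p1)
    (by nlinarith) (by positivity)
  intro s t hst
  exact hΔ (hstar0.trans (hlow t)) (hstar0.trans (hlow s)) (hanti hst)

/-- Contrast recursion: monotone decrease to a fixed point.
For `n ≥ 2`, `0 < p1 < p0 < 1` with `n(p0 − p1) > 2p0`: (i) `f_n` is strictly increasing on
`(0,1]` and `s ↦ f_n(s)/s` is strictly decreasing there; (ii) `s* ∈ [0,1)`, the sequence `(s_t)`
is nonincreasing, stays in `[s*,1]`, and converges to `s*`; (iii) `Δ_t` is nondecreasing. -/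
theorem contrast_recursion (n : ℕ) (hn : 2 ≤ n) (p0 p1 : ℝ)
    (hp1 : 0 < p1) (hp01 : p1 < p0) (hp0 : p0 < 1)
    (hgap : 2 * p0 < (n : ℝ) * (p0 - p1)) :
    StrictMonoOn (fmap n p0 p1) (Set.Ioc 0 1)
    ∧ StrictAntiOn (fun s => fmap n p0 p1 s / s) (Set.Ioc 0 1)
    ∧ (0 ≤ sstar n p0 p1 ∧ sstar n p0 p1 < 1)
    ∧ (∀ t, sseq n p0 p1 (t + 1) ≤ sseq n p0 p1 t)
    ∧ (∀ t, sstar n p0 p1 ≤ sseq n p0 p1 t ∧ sseq n p0 p1 t ≤ 1)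
    ∧ Filter.Tendsto (sseq n p0 p1) Filter.atTop (nhds (sstar n p0 p1))
    ∧ Monotone (Delta n p0 p1) :=
  contrast_recursion_general n p0 p1 hp1 hp01 hgap

end ContrastRecursion
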